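/- Let (a_n) be a sequence of real numbers with |a_i − L| ≤ M·i^{−m} for all i ≥ 1, where m > 1/2 and M ≥ 0 and L is a real number. Then √n·|(1/n)∑_{i=1}^n a_i − L| → 0 as n → ∞. -/

import Mathlib

/-! Lower `m` to `1 - q` with `0 < q < 1/2`. By concavity of `x ↦ x^q`,
`q i^(q-1) ≤ i^q - (i-1)^q`, so the sum telescopes and the error of the average is at most
`(M/n) ∑_{i ≤ n} i^(q-1) ≤ (M/q) n^(q-1)`. Multiplying by `√n` leaves `(M/q) n^(q - 1/2) → 0`. -/

open Filter Finset

namespace Real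

theorem rpow_le_rpow_add_mul_sub {q x y : ℝ} (hq₀ : 0 ≤ q) (hq₁ : q ≤ 1) (hx : 0 < x)
    (hy : 0 ≤ y) : y ^ q ≤ x ^ q + q * x ^ (q - 1) * (y - x) := by
  have hbern : (y / x) ^ q ≤ 1 + q * (y / x - 1) := by
    simpa using rpow_one_add_le_one_add_mul_self (s := y / x - 1)
      (by linarith [div_nonneg hy hx.le]) hq₀ hq₁
  calc y ^ q = x ^ q * (y / x) ^ q := by
        rw [← mul_rpow hx.le (div_nonneg hy hx.le), mul_div_cancel₀ _ hx.ne']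
    _ ≤ x ^ q * (1 + q * (y / x - 1)) := by gcongr
    _ = x ^ q + q * x ^ (q - 1) * (y - x) := by
        rw [rpow_sub_one hx.ne']
        field_simp

theorem sum_Icc_rpow_sub_one_le {q : ℝ} (hq₀ : 0 < q) (hq₁ : q ≤ 1) (n : ℕ) :
    ∑ i ∈ Icc 1 n, (i : ℝ) ^ (q - 1) ≤ (n : ℝ) ^ q / q := by
  induction n with
  | zero => simp [zero_rpow hq₀.ne']
  | succ n ih =>
    rw [sum_Icc_succ_top (by omega)]
    have htangent := rpow_le_rpow_add_mul_sub hq₀.le hq₁ (x := (n + 1 : ℕ)) (y := n)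
      (by positivity) (by positivity)
    rw [le_div_iff₀ hq₀] at ih ⊢
    push_cast at htangent ⊢
    linarith

end Real

theorem abs_one_div_mul_sum_Icc_sub_le (a : ℕ → ℝ) (L : ℝ) {n : ℕ} (hn : n ≠ 0) :
    |1 / n * ∑ i ∈ Icc 1 n, a i - L| ≤ 1 / n * ∑ i ∈ Icc 1 n, |a i - L| := by
  have hmean : 1 / n * ∑ i ∈ Icc 1 n, a i - L = 1 / n * ∑ i ∈ Icc 1 n, (a i - L) := by
    rw [sum_sub_distrib, sum_const, Nat.card_Icc, add_tsub_cancel_right, nsmul_eq_mul]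
    field_simp
  rw [hmean, abs_mul, abs_of_nonneg (by positivity)]
  gcongr
  exact abs_sum_le_sum_abs _ _

theorem sqrt_mul_abs_one_div_mul_sum_Icc_sub_le (a : ℕ → ℝ) {L M q : ℝ} (hM : 0 ≤ M)
    (hq₀ : 0 < q) (hq₁ : q ≤ 1) (ha : ∀ i : ℕ, 1 ≤ i → |a i - L| ≤ M * (i : ℝ) ^ (q - 1))
    {n : ℕ} (hn : n ≠ 0) :
    √n * |1 / n * ∑ i ∈ Icc 1 n, a i - L| ≤ M / q * (n : ℝ) ^ (q - 1 / 2) := by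
  have hn₀ : (0 : ℝ) < n := by positivity
  have hsum : ∑ i ∈ Icc 1 n, |a i - L| ≤ M * ((n : ℝ) ^ q / q) := by
    calc ∑ i ∈ Icc 1 n, |a i - L| ≤ ∑ i ∈ Icc 1 n, M * (i : ℝ) ^ (q - 1) :=
          sum_le_sum fun i hi => ha i (mem_Icc.1 hi).1
      _ = M * ∑ i ∈ Icc 1 n, (i : ℝ) ^ (q - 1) := (mul_sum ..).symm
      _ ≤ M * ((n : ℝ) ^ q / q) := mul_le_mul_of_nonneg_left
          (Real.sum_Icc_rpow_sub_one_le hq₀ hq₁ n) hM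
  calc √n * |1 / n * ∑ i ∈ Icc 1 n, a i - L|
      ≤ √n * (1 / n * (M * ((n : ℝ) ^ q / q))) := by
        gcongr
        exact (abs_one_div_mul_sum_Icc_sub_le a L hn).trans (by gcongr)
    _ = M / q * (n : ℝ) ^ (q - 1 / 2) := by
        rw [Real.rpow_sub hn₀, ← Real.sqrt_eq_rpow]
        field_simp
        rw [Real.sq_sqrt hn₀.le]

theorem stmt_10 (a : ℕ → ℝ) (L M m : ℝ) (hm : 1/2 < m) (hM : 0 ≤ M)
    (ha : ∀ i : ℕ, 1 ≤ i → |a i - L| ≤ M * (i : ℝ) ^ (-m)) :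
    Tendsto (fun n : ℕ => Real.sqrt n * |(1 / n) * ∑ i ∈ Finset.Icc 1 n, a i - L|)
      atTop (nhds 0) := by
  set q := max (1 - m) (1 / 4)
  have hq₀ : 0 < q := lt_max_of_lt_right (by norm_num)
  have hq : q < 1 / 2 := max_lt (by linarith) (by norm_num)
  have ha' : ∀ i : ℕ, 1 ≤ i → |a i - L| ≤ M * (i : ℝ) ^ (q - 1) := fun i hi =>
    (ha i hi).trans <| by
      gcongr
      · exact_mod_cast hi
      · linarith [le_max_left (1 - m) (1 / 4)]
  have hdecay : Tendsto (fun n : ℕ => M / q * (n : ℝ) ^ (q - 1 / 2)) atTop (nhds 0) := by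
    simpa using ((tendsto_rpow_neg_atTop (y := 1 / 2 - q) (by linarith)).comp
      tendsto_natCast_atTop_atTop).const_mul (M / q)
  refine squeeze_zero' (.of_forall fun n => by positivity) ?_ hdecay
  filter_upwards [eventually_ne_atTop 0] with n hn
  exact sqrt_mul_abs_one_div_mul_sum_Icc_sub_le a hM hq₀ (by linarith) ha' hn
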